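/- Let A(ξ) = ξ₁⁴ + 2β ξ₁²ξ₂² + ξ₂⁴ with -1 < β ≤ 0, and p₊(x) = sup_{ξ≠0} (x·ξ)/A(ξ)^{1/4}. Then for every s > 0, p₊(s, s) = 2^{3/4} (1+β)^{-1/4} s. -/
import Mathlib


/-- The quartic symbol `A(ξ) = ξ₁⁴ + 2β ξ₁²ξ₂² + ξ₂⁴`. -/
noncomputable def symbA (β : ℝ) (ξ : ℝ × ℝ) : ℝ :=
  ξ.1 ^ 4 + 2 * β * ξ.1 ^ 2 * ξ.2 ^ 2 + ξ.2 ^ 4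

/-- The dual Finsler metric `p₊(x) = sup_{ξ ≠ 0} (x·ξ)/A(ξ)^{1/4}`. -/
noncomputable def pstar (β : ℝ) (x : ℝ × ℝ) : ℝ :=
  sSup {r : ℝ | ∃ ξ : ℝ × ℝ, ξ ≠ 0 ∧
    r = (x.1 * ξ.1 + x.2 * ξ.2) / (symbA β ξ) ^ ((1 : ℝ) / 4)}

/-- for `-1 < β ≤ 0` and `s > 0`, `p₊(s,s) = 2^{3/4} (1+β)^{-1/4} s`. -/
theorem stmt8 (β : ℝ) (hβ1 : -1 < β) (hβ2 : β ≤ 0) (s : ℝ) (hs : 0 < s) :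
    pstar β (s, s) = (2 : ℝ) ^ ((3 : ℝ) / 4) * (1 + β) ^ (-(1 : ℝ) / 4) * s := by
  have hc : (0:ℝ) < 1 + β := by linarith
  set M : ℝ := (2 : ℝ) ^ ((3 : ℝ) / 4) * (1 + β) ^ (-(1 : ℝ) / 4) * s with hM
  have hMpos : 0 < M := by
    apply mul_pos (mul_pos _ _) hs
    · exact Real.rpow_pos_of_pos two_pos _
    · exact Real.rpow_pos_of_pos hc _
  -- positivity of A
  have hApos : ∀ ξ : ℝ × ℝ, ξ ≠ 0 → 0 < symbA β ξ := by
    intro ξ hξ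
    have hne : ξ.1 ≠ 0 ∨ ξ.2 ≠ 0 := by
      by_contra h
      push_neg at h
      exact hξ (Prod.ext h.1 h.2)
    have hsq : 0 < ξ.1 ^ 2 + ξ.2 ^ 2 := by
      rcases hne with h | h
      · have := pow_pos (abs_pos.mpr h) 2
        nlinarith [sq_nonneg ξ.2, sq_abs ξ.1]
      · have := pow_pos (abs_pos.mpr h) 2
        nlinarith [sq_nonneg ξ.1, sq_abs ξ.2]
    have h1 : (0:ℝ) ≤ (1 - β) * (ξ.1 ^ 2 - ξ.2 ^ 2) ^ 2 :=
      mul_nonneg (by linarith) (sq_nonneg _)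
    have h2 : 0 < (1 + β) * ((ξ.1 ^ 2 + ξ.2 ^ 2) * (ξ.1 ^ 2 + ξ.2 ^ 2)) :=
      mul_pos hc (mul_pos hsq hsq)
    unfold symbA
    nlinarith [h1, h2]
  -- upper bound
  have hub : ∀ r ∈ {r : ℝ | ∃ ξ : ℝ × ℝ, ξ ≠ 0 ∧
      r = ((s,s).1 * ξ.1 + (s,s).2 * ξ.2) / (symbA β ξ) ^ ((1 : ℝ) / 4)}, r ≤ M := by
    rintro r ⟨ξ, hξ, rfl⟩
    have hA := hApos ξ hξ
    have hA4 : 0 < (symbA β ξ) ^ ((1:ℝ)/4) := Real.rpow_pos_of_pos hA _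
    rw [div_le_iff₀ hA4]
    rcases le_or_gt ((s,s).1 * ξ.1 + (s,s).2 * ξ.2) 0 with h | h
    · exact h.trans (by positivity)
    · -- raise to 4th powers
      have hroot : ((symbA β ξ) ^ ((1:ℝ)/4)) ^ (4:ℕ) = symbA β ξ := by
        rw [← Real.rpow_natCast ((symbA β ξ) ^ ((1:ℝ)/4)) 4, ← Real.rpow_mul hA.le]
        norm_num
      have hM4 : M ^ (4:ℕ) = 8 * s ^ 4 / (1 + β) := by
        have h2 : ((2:ℝ) ^ ((3:ℝ)/4)) ^ (4:ℕ) = 8 := by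
          rw [← Real.rpow_natCast ((2:ℝ) ^ ((3:ℝ)/4)) 4, ← Real.rpow_mul two_pos.le]
          norm_num
        have h3 : ((1 + β : ℝ) ^ (-(1:ℝ)/4)) ^ (4:ℕ) = (1 + β)⁻¹ := by
          rw [← Real.rpow_natCast ((1 + β : ℝ) ^ (-(1:ℝ)/4)) 4, ← Real.rpow_mul hc.le]
          norm_num [Real.rpow_neg_one]
        rw [hM, mul_pow, mul_pow, h2, h3]
        ring
      refine le_of_pow_le_pow_left₀ (n := 4) (by norm_num) (by positivity) ?_
      rw [mul_pow, hroot, hM4]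
      have key : (1 + β) * (ξ.1 + ξ.2) ^ 4 ≤ 8 * symbA β ξ := by
        unfold symbA
        nlinarith [mul_nonneg hc.le (sq_nonneg (ξ.1 - ξ.2)),
          mul_nonneg (by linarith : (0:ℝ) ≤ 1 - β) (sq_nonneg (ξ.1 ^ 2 - ξ.2 ^ 2)),
          sq_nonneg (ξ.1 - ξ.2), sq_nonneg (ξ.1 + ξ.2),
          mul_nonneg hc.le (mul_nonneg (sq_nonneg (ξ.1 + ξ.2)) (sq_nonneg (ξ.1 - ξ.2)))]
      have hs4 : (0:ℝ) < s ^ 4 := by positivity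
      rw [div_mul_eq_mul_div, le_div_iff₀ hc]
      calc ((s,s).1 * ξ.1 + (s,s).2 * ξ.2) ^ 4 * (1 + β)
          = s ^ 4 * ((1 + β) * (ξ.1 + ξ.2) ^ 4) := by ring
        _ ≤ s ^ 4 * (8 * symbA β ξ) := by
            exact mul_le_mul_of_nonneg_left key hs4.le
        _ = 8 * s ^ 4 * symbA β ξ := by ring
  -- the value is attained at ξ = (1,1)
  have hmem : M ∈ {r : ℝ | ∃ ξ : ℝ × ℝ, ξ ≠ 0 ∧
      r = ((s,s).1 * ξ.1 + (s,s).2 * ξ.2) / (symbA β ξ) ^ ((1 : ℝ) / 4)} := by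
    refine ⟨(1, 1), by simp [Prod.ext_iff], ?_⟩
    have hAval : symbA β (1, 1) = 2 * (1 + β) := by unfold symbA; ring
    rw [hAval, Real.mul_rpow two_pos.le hc.le]
    have h2 : (2:ℝ) ^ ((3:ℝ)/4) * (2:ℝ) ^ ((1:ℝ)/4) = 2 := by
      rw [← Real.rpow_add two_pos]; norm_num
    have h3 : ((1+β:ℝ)) ^ (-(1:ℝ)/4) * (1+β) ^ ((1:ℝ)/4) = 1 := by
      rw [← Real.rpow_add hc]; norm_num
    rw [hM, eq_div_iff (by positivity)]
    calc (2:ℝ) ^ ((3:ℝ)/4) * (1+β) ^ (-(1:ℝ)/4) * s *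
          ((2:ℝ) ^ ((1:ℝ)/4) * (1+β) ^ ((1:ℝ)/4))
        = ((2:ℝ) ^ ((3:ℝ)/4) * (2:ℝ) ^ ((1:ℝ)/4)) *
          ((1+β:ℝ) ^ (-(1:ℝ)/4) * (1+β) ^ ((1:ℝ)/4)) * s := by ring
      _ = (s,s).1 * 1 + (s,s).2 * 1 := by rw [h2, h3]; ring
  unfold pstar
  exact le_antisymm (csSup_le ⟨M, hmem⟩ hub) (le_csSup ⟨M, hub⟩ hmem)
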